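/- Let R₂ be as defined. For every position (x, 2x+1) with x ≥ 1, there is exactly one z with 0 ≤ z < 2x+1 such that (x, z) ∈ R₂ (i.e., exactly one vertical Wythoff Nim option of (x, 2x+1) lies in R₂). -/

import Mathlib

noncomputable def goldenPhi : ℝ := (1 + Real.sqrt 5) / 2

/-- The candidate set of P-positions of Blocking-2 Wythoff Nim. -/
def R2 : Set (ℕ × ℕ) :=
  {(0, 0)} ∪
  {p | ∃ n : ℕ, p = (n, 2 * n + 1) ∨ p = (2 * n + 1, n)} ∪
  {p | ∃ n : ℕ, p = (2 * ⌊goldenPhi * n⌋₊ + 2, 2 * ⌊goldenPhi ^ 2 * n⌋₊ + 2) ∨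
                p = (2 * ⌊goldenPhi ^ 2 * n⌋₊ + 2, 2 * ⌊goldenPhi * n⌋₊ + 2)}

/-!
Below height `2x+1`, column `x = 2k+1` of `R₂` contains only `(2k+1, k)`, and column `x = 2m+2`
only the points `(2m+2, 2b+2)` with `(m, b)` a Wythoff pair `(⌊φn⌋, ⌊φ²n⌋)` or `(⌊φ²n⌋, ⌊φn⌋)`
(these satisfy `b ≤ 2m`). By Rayleigh's theorem the Beatty sequences of `φ` and `φ²` partition the
positive integers, so every `m` is the first coordinate of exactly one Wythoff pair.
-/

open Real goldenRatio

lemma goldenPhi_eq_goldenRatio : goldenPhi = φ := rfl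

def beattyPairs (r s : ℝ) : Set (ℕ × ℕ) :=
  {p | ∃ n : ℕ, p = (⌊r * n⌋₊, ⌊s * n⌋₊) ∨ p = (⌊s * n⌋₊, ⌊r * n⌋₊)}

section Beatty

variable {r s : ℝ}

lemma natFloor_mul_strictMono (hr : 1 ≤ r) : StrictMono fun n : ℕ => ⌊r * n⌋₊ := by
  intro n n' h
  show _ < _
  rw [← Nat.add_one_le_iff, Nat.le_floor_iff (by positivity)]
  push_cast
  calc (⌊r * n⌋₊ : ℝ) + 1 ≤ r * n + 1 := by gcongr; exact Nat.floor_le (by positivity)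
    _ ≤ r * n + r := by gcongr
    _ = r * (n + 1 : ℕ) := by push_cast; ring
    _ ≤ r * n' := by gcongr; exact h

lemma beattySeq_natCast (hr : 0 ≤ r) (n : ℕ) : beattySeq r n = ⌊r * n⌋₊ := by
  rw [beattySeq, Int.natCast_floor_eq_floor (by positivity), mul_comm, Int.cast_natCast]

lemma exists_natFloor_mul_eq (hrs : r.HolderConjugate s) (hr : Irrational r) (m : ℕ) :
    (∃ n : ℕ, ⌊r * n⌋₊ = m) ∨ ∃ n : ℕ, ⌊s * n⌋₊ = m := by
  rcases m.eq_zero_or_pos with rfl | hm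
  · exact .inl ⟨0, by simp⟩
  have hmem : (m : ℤ) ∈ {n : ℤ | 0 < n} := by simpa using hm
  rw [← hr.beattySeq_symmDiff_beattySeq_pos hrs, Set.mem_symmDiff] at hmem
  rcases hmem with ⟨⟨k, hk, hkm⟩, -⟩ | ⟨⟨k, hk, hkm⟩, -⟩
  · lift k to ℕ using hk.le
    rw [beattySeq_natCast hrs.nonneg] at hkm
    exact .inl ⟨k, by exact_mod_cast hkm⟩
  · lift k to ℕ using hk.le
    rw [beattySeq_natCast hrs.symm.nonneg] at hkm
    exact .inr ⟨k, by exact_mod_cast hkm⟩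

lemma eq_zero_of_natFloor_mul_eq (hrs : r.HolderConjugate s) (hr : Irrational r) {n n' : ℕ}
    (h : ⌊r * n⌋₊ = ⌊s * n'⌋₊) : n = 0 ∧ n' = 0 := by
  have hr0 := (natFloor_mul_strictMono hrs.lt.le).lt_iff_lt (a := 0) (b := n)
  have hs0 := (natFloor_mul_strictMono hrs.symm.lt.le).lt_iff_lt (a := 0) (b := n')
  simp only [CharP.cast_eq_zero, mul_zero, Nat.floor_zero] at hr0 hs0
  by_contra hne
  have hn : 0 < n := by omega
  have hn' : 0 < n' := by omega
  have hdisj := hr.beattySeq_symmDiff_beattySeq_pos hrs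
  have hmem : (⌊r * n⌋₊ : ℤ) ∈ {n : ℤ | 0 < n} := by simpa using hr0.2 hn
  rw [← hdisj, Set.mem_symmDiff] at hmem
  have hA : (⌊r * n⌋₊ : ℤ) ∈ {beattySeq r k | k > 0} :=
    ⟨n, by exact_mod_cast hn, beattySeq_natCast hrs.nonneg n⟩
  have hB : (⌊r * n⌋₊ : ℤ) ∈ {beattySeq s k | k > 0} :=
    ⟨n', by exact_mod_cast hn', by rw [beattySeq_natCast hrs.symm.nonneg, h]⟩
  tauto

lemma existsUnique_mem_beattyPairs (hrs : r.HolderConjugate s) (hr : Irrational r) (m : ℕ) :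
    ∃! w, (m, w) ∈ beattyPairs r s := by
  have hinj_r := (natFloor_mul_strictMono hrs.lt.le).injective
  have hinj_s := (natFloor_mul_strictMono hrs.symm.lt.le).injective
  rcases exists_natFloor_mul_eq hrs hr m with ⟨n, rfl⟩ | ⟨n, rfl⟩
  · refine ⟨⌊s * n⌋₊, ⟨n, .inl rfl⟩, ?_⟩
    rintro w ⟨n', h | h⟩ <;> obtain ⟨hm, rfl⟩ := Prod.mk.inj h
    · rw [hinj_r hm]
    · obtain ⟨rfl, rfl⟩ := eq_zero_of_natFloor_mul_eq hrs hr hm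
      simp
  · refine ⟨⌊r * n⌋₊, ⟨n, .inr rfl⟩, ?_⟩
    rintro w ⟨n', h | h⟩ <;> obtain ⟨hm, rfl⟩ := Prod.mk.inj h
    · obtain ⟨rfl, rfl⟩ := eq_zero_of_natFloor_mul_eq hrs hr hm.symm
      simp
    · rw [hinj_s hm]

end Beatty

lemma holderConjugate_goldenRatio_sq : HolderConjugate φ (φ ^ 2) := by
  rw [holderConjugate_iff, ← inv_pow, inv_goldenRatio, neg_sq, goldenConj_sq]
  exact ⟨one_lt_goldenRatio, by ring⟩

lemma natFloor_goldenRatio_sq_mul (n : ℕ) : ⌊φ ^ 2 * n⌋₊ = ⌊φ * n⌋₊ + n := by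
  rw [goldenRatio_sq, add_mul, one_mul, Nat.floor_add_natCast (by positivity)]

lemma le_two_mul_of_mem_beattyPairs_goldenRatio {m w : ℕ} (h : (m, w) ∈ beattyPairs φ (φ ^ 2)) :
    w ≤ 2 * m := by
  obtain ⟨n, ⟨rfl, rfl⟩ | ⟨rfl, rfl⟩⟩ := h <;>
  · have := (natFloor_mul_strictMono one_lt_goldenRatio.le).id_le n
    simp only [natFloor_goldenRatio_sq_mul, id] at this ⊢
    omega

lemma mem_R2_odd_column {k z : ℕ} : (2 * k + 1, z) ∈ R2 ↔ z = k ∨ z = 2 * (2 * k + 1) + 1 := by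
  simp only [R2, Set.mem_union, Set.mem_singleton_iff, Set.mem_ofPred_eq, Prod.mk.injEq]
  constructor
  · rintro ((h | ⟨n, h | h⟩) | ⟨n, h | h⟩) <;> omega
  · rintro (h | h) <;> subst z
    · exact .inl (.inr ⟨k, .inr ⟨rfl, rfl⟩⟩)
    · exact .inl (.inr ⟨2 * k + 1, .inl ⟨rfl, rfl⟩⟩)

lemma mem_R2_even_column {m z : ℕ} : (2 * m + 2, z) ∈ R2 ↔
    z = 2 * (2 * m + 2) + 1 ∨ ∃ w, (m, w) ∈ beattyPairs φ (φ ^ 2) ∧ z = 2 * w + 2 := by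
  simp only [R2, beattyPairs, goldenPhi_eq_goldenRatio, Set.mem_union, Set.mem_singleton_iff,
    Set.mem_ofPred_eq, Prod.mk.injEq]
  constructor
  · rintro ((h | ⟨n, h | h⟩) | ⟨n, h | h⟩)
    · omega
    · exact .inl (by omega)
    · omega
    · exact .inr ⟨_, ⟨n, .inl ⟨by omega, rfl⟩⟩, h.2⟩
    · exact .inr ⟨_, ⟨n, .inr ⟨by omega, rfl⟩⟩, h.2⟩
  · rintro (rfl | ⟨w, ⟨n, ⟨rfl, rfl⟩ | ⟨rfl, rfl⟩⟩, rfl⟩)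
    · exact .inl (.inr ⟨_, .inl ⟨rfl, rfl⟩⟩)
    · exact .inr ⟨n, .inl ⟨rfl, rfl⟩⟩
    · exact .inr ⟨n, .inr ⟨rfl, rfl⟩⟩

/-- For every x ≥ 1, exactly one vertical option of (x, 2x+1) lies in R₂:
there is exactly one z with 0 ≤ z < 2x+1 and (x,z) ∈ R₂. -/
theorem R2_vertical_unique :
    ∀ x : ℕ, 1 ≤ x → ∃! z : ℕ, z < 2 * x + 1 ∧ (x, z) ∈ R2 := by
  intro x hx
  obtain ⟨m, rfl⟩ | ⟨k, rfl⟩ : (∃ m, x = 2 * m + 2) ∨ ∃ k, x = 2 * k + 1 := by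
    obtain ⟨k, h | h⟩ := Nat.even_or_odd' x
    exacts [.inl ⟨k - 1, by omega⟩, .inr ⟨k, h⟩]
  · obtain ⟨w, hw, hw_unique⟩ :=
      existsUnique_mem_beattyPairs holderConjugate_goldenRatio_sq goldenRatio_irrational m
    have hw_le := le_two_mul_of_mem_beattyPairs_goldenRatio hw
    refine ⟨2 * w + 2, ⟨by omega, mem_R2_even_column.2 (.inr ⟨w, hw, rfl⟩)⟩, ?_⟩
    rintro z ⟨hz, hmem⟩
    obtain h | ⟨w', hw', rfl⟩ := mem_R2_even_column.1 hmem
    · omega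
    · rw [hw_unique w' hw']
  · refine ⟨k, ⟨by omega, mem_R2_odd_column.2 (.inl rfl)⟩, fun z ⟨hz, hmem⟩ => ?_⟩
    exact (mem_R2_odd_column.1 hmem).resolve_right (by omega)
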